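/- Let (U, R, 𝓕) be a CF-approximation space and E ∈ 𝔠(U, R, 𝓕). If S*(K, F) ≠ ∅ for every K ∈ 𝓕^♯ and every F ∈ 𝓕 with R̄(K) ⊆ R̄(F), then ({H ∈ 𝔠(U, R, 𝓕) : H ⊆ E}, ⊆) is a sup-semilattice, i.e. any two CF-closed subsets of E have a least upper bound among the CF-closed subsets of E. -/

import Mathlib

open Set

/-- The upper approximation operator: `upp R A = {x | ∃ y ∈ A, x R y}`. -/
def upp {U : Type*} (R : U → U → Prop) (A : Set U) : Set U := {x | ∃ y ∈ A, R x y}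

/-- `(U, R, 𝓕)` is a CF-approximation space. -/
def IsCFApprox {U : Type*} (R : U → U → Prop) (𝓕 : Set (Set U)) : Prop :=
  Transitive R ∧ 𝓕.Nonempty ∧ (∀ F ∈ 𝓕, F.Finite) ∧
    ∀ F ∈ 𝓕, ∀ K : Set U, K.Finite → K ⊆ upp R F →
      ∃ G ∈ 𝓕, K ⊆ upp R G ∧ G ⊆ upp R F

/-- `E` is a CF-closed set of `(U, R, 𝓕)`. -/
def CFClosed {U : Type*} (R : U → U → Prop) (𝓕 : Set (Set U)) (E : Set U) : Prop :=
  ∀ K : Set U, K.Finite → K ⊆ E →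
    ∃ F ∈ 𝓕, K ⊆ upp R F ∧ upp R F ⊆ E ∧ F ⊆ E

/-- The join saturation `𝓕^♯`: all unions of nonempty finite subfamilies of `𝓕`. -/
def joinSat {U : Type*} (𝓕 : Set (Set U)) : Set (Set U) :=
  {A | ∃ 𝓐 : Set (Set U), 𝓐 ⊆ 𝓕 ∧ 𝓐.Finite ∧ 𝓐.Nonempty ∧ A = ⋃₀ 𝓐}

/-- `S(M, F)`: the set of `G ∈ 𝓕` satisfying (sL-1) and (sL-2). -/
def SFam {U : Type*} (R : U → U → Prop) (𝓕 : Set (Set U)) (M F : Set U) : Set (Set U) :=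
  {G | G ∈ 𝓕 ∧ upp R M ⊆ upp R G ∧ upp R G ⊆ upp R F ∧
    ∀ G' ∈ 𝓕, upp R M ⊆ upp R G' → upp R G' ⊆ upp R F → upp R G ⊆ upp R G'}

/-- `S*(M, F) = {G ∈ S(M, F) | G ⊆ upp R F}`. -/
def SStar {U : Type*} (R : U → U → Prop) (𝓕 : Set (Set U)) (M F : Set U) : Set (Set U) :=
  {G | G ∈ SFam R 𝓕 M F ∧ G ⊆ upp R F}

/-- sL-approximation space. -/
def IsSLApprox {U : Type*} (R : U → U → Prop) (𝓕 : Set (Set U)) : Prop :=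
  IsCFApprox R 𝓕 ∧
    ∀ M ∈ joinSat 𝓕, ∀ F ∈ 𝓕, M ⊆ upp R F → (SFam R 𝓕 M F).Nonempty

/-- L-approximation space. -/
def IsLApprox {U : Type*} (R : U → U → Prop) (𝓕 : Set (Set U)) : Prop :=
  IsCFApprox R 𝓕 ∧
    ∀ M ∈ joinSat 𝓕 ∪ {(∅ : Set U)}, ∀ F ∈ 𝓕, M ⊆ upp R F → (SFam R 𝓕 M F).Nonempty

/-- bc-approximation space. -/
def IsBCApprox {U : Type*} (R : U → U → Prop) (𝓕 : Set (Set U)) : Prop :=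
  IsCFApprox R 𝓕 ∧
    ∀ M ∈ joinSat 𝓕 ∪ {(∅ : Set U)}, ∀ F ∈ 𝓕, M ⊆ upp R F →
      ∃ G ∈ 𝓕, upp R M ⊆ upp R G ∧ upp R G ⊆ upp R F ∧
        ∀ G' ∈ 𝓕, upp R M ⊆ upp R G' → upp R G ⊆ upp R G'

/-- A dcpo: every (nonempty) directed subset has a supremum. -/
def IsDcpo (P : Type*) [PartialOrder P] : Prop :=
  ∀ D : Set P, D.Nonempty → DirectedOn (· ≤ ·) D → ∃ s, IsLUB D s

/-- The way-below relation `x ≪ y`. -/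
def WayBelow {P : Type*} [PartialOrder P] (x y : P) : Prop :=
  ∀ D : Set P, D.Nonempty → DirectedOn (· ≤ ·) D →
    ∀ s, IsLUB D s → y ≤ s → ∃ d ∈ D, x ≤ d

/-- Continuous domain: a dcpo in which for every `x` the set `{z | z ≪ x}` is
directed with supremum `x`. -/
def IsContinuousDomain (P : Type*) [PartialOrder P] : Prop :=
  IsDcpo P ∧ ∀ x : P, {z | WayBelow z x}.Nonempty ∧
    DirectedOn (· ≤ ·) {z | WayBelow z x} ∧ IsLUB {z | WayBelow z x} x

/-- Algebraic domain: a dcpo in which for every `x` the set `↓x ∩ K(P)` is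
directed with supremum `x`. -/
def IsAlgebraicDomain (P : Type*) [PartialOrder P] : Prop :=
  IsDcpo P ∧ ∀ x : P, ({k | k ≤ x ∧ WayBelow k k}).Nonempty ∧
    DirectedOn (· ≤ ·) {k | k ≤ x ∧ WayBelow k k} ∧
    IsLUB {k | k ≤ x ∧ WayBelow k k} x

/-- sL-domain: a continuous domain in which every principal ideal is a
sup-semilattice. -/
def IsSLDomain (P : Type*) [PartialOrder P] : Prop :=
  IsContinuousDomain P ∧ ∀ x a b : P, a ≤ x → b ≤ x →
    ∃ s, s ≤ x ∧ a ≤ s ∧ b ≤ s ∧ ∀ t, t ≤ x → a ≤ t → b ≤ t → s ≤ t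

/-- L-domain: a continuous domain in which every principal ideal is a
complete lattice (every subset of `↓x` has a least upper bound in `↓x`). -/
def IsLDomain (P : Type*) [PartialOrder P] : Prop :=
  IsContinuousDomain P ∧ ∀ (x : P) (A : Set P), (∀ a ∈ A, a ≤ x) →
    ∃ s, s ≤ x ∧ (∀ a ∈ A, a ≤ s) ∧ ∀ t, t ≤ x → (∀ a ∈ A, a ≤ t) → s ≤ t

/-- bc-domain: a continuous domain in which every up-bounded subset has a
supremum. -/
def IsBCDomain (P : Type*) [PartialOrder P] : Prop :=
  IsContinuousDomain P ∧ ∀ A : Set P, (∃ b, ∀ a ∈ A, a ≤ b) → ∃ s, IsLUB A s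

/-!
For a finite `M ∈ 𝓕^♯` inside `E`, the set `R̄(G)` with `G ∈ S(M, F)` does not depend on the
choice of `F ∈ 𝓕` with `R̄(M) ⊆ R̄(F) ⊆ E`: two such `F` lie below a common third one, since `E` is
CF-closed, and enlarging `F` does not move the least `R̄(G)`. This gives a monotone assignment
`M ↦ R̄(G_M)`, and the supremum of `H₁` and `H₂` is the union of these sets over all `M ∈ 𝓕^♯`
contained in `H₁ ∪ H₂`. The union is directed because `𝓕^♯` is closed under binary unions, and a
directed union of sets `R̄(G)` with `G ∈ 𝓕` is CF-closed by the interpolation axiom.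
-/

section CFSup

variable {U : Type*} {R : U → U → Prop} {𝓕 : Set (Set U)}

theorem upp_mono {A B : Set U} (h : A ⊆ B) : upp R A ⊆ upp R B := by
  rintro x ⟨y, hy, hxy⟩
  exact ⟨y, h hy, hxy⟩

theorem upp_subset_upp_of_subset_upp (hR : Transitive R) {A B : Set U} (h : A ⊆ upp R B) :
    upp R A ⊆ upp R B := by
  rintro x ⟨y, hy, hxy⟩
  obtain ⟨z, hz, hyz⟩ := h hy
  exact ⟨z, hz, hR hxy hyz⟩

theorem mem_joinSat_of_mem {F : Set U} (hF : F ∈ 𝓕) : F ∈ joinSat 𝓕 :=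
  ⟨{F}, singleton_subset_iff.2 hF, finite_singleton F, singleton_nonempty F,
    (sUnion_singleton F).symm⟩

theorem union_mem_joinSat {M N : Set U} (hM : M ∈ joinSat 𝓕) (hN : N ∈ joinSat 𝓕) :
    M ∪ N ∈ joinSat 𝓕 := by
  obtain ⟨𝓐, h𝓐𝓕, h𝓐fin, h𝓐ne, rfl⟩ := hM
  obtain ⟨𝓑, h𝓑𝓕, h𝓑fin, -, rfl⟩ := hN
  exact ⟨𝓐 ∪ 𝓑, union_subset h𝓐𝓕 h𝓑𝓕, h𝓐fin.union h𝓑fin, h𝓐ne.mono subset_union_left,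
    (sUnion_union 𝓐 𝓑).symm⟩

theorem finite_of_mem_joinSat (hfin : ∀ F ∈ 𝓕, F.Finite) {M : Set U} (hM : M ∈ joinSat 𝓕) :
    M.Finite := by
  obtain ⟨𝓐, h𝓐𝓕, h𝓐fin, -, rfl⟩ := hM
  exact h𝓐fin.sUnion fun F hF => hfin F (h𝓐𝓕 hF)

theorem CFClosed.exists_subset {H : Set U} (hH : CFClosed R 𝓕 H) : ∃ F ∈ 𝓕, F ⊆ H := by
  obtain ⟨F, hF, -, -, hFH⟩ := hH ∅ finite_empty (empty_subset H)
  exact ⟨F, hF, hFH⟩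

theorem CFClosed.exists_subset_mem_upp {H : Set U} (hH : CFClosed R 𝓕 H) {x : U} (hx : x ∈ H) :
    ∃ F ∈ 𝓕, F ⊆ H ∧ x ∈ upp R F := by
  obtain ⟨F, hF, hxF, -, hFH⟩ := hH {x} (finite_singleton x) (singleton_subset_iff.2 hx)
  exact ⟨F, hF, hFH, hxF rfl⟩

theorem cfClosed_biUnion {ι : Type*} (hR : Transitive R)
    (hinterp : ∀ F ∈ 𝓕, ∀ K : Set U, K.Finite → K ⊆ upp R F →
      ∃ G ∈ 𝓕, K ⊆ upp R G ∧ G ⊆ upp R F)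
    {c : Set ι} {f : ι → Set U} (hc : c.Nonempty) (hdir : DirectedOn (fun i j => f i ⊆ f j) c)
    (hf : ∀ i ∈ c, ∃ G ∈ 𝓕, f i = upp R G) :
    CFClosed R 𝓕 (⋃ i ∈ c, f i) := by
  intro K hK hKc
  rw [← hK.coe_toFinset] at hKc
  obtain ⟨i, hi, hKi⟩ := hdir.exists_mem_subset_of_finset_subset_biUnion hc hKc
  rw [hK.coe_toFinset] at hKi
  obtain ⟨G, hG, hfi⟩ := hf i hi
  obtain ⟨G', hG', hKG', hG'G⟩ := hinterp G hG K hK (hfi ▸ hKi)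
  have hGc : upp R G ⊆ ⋃ i ∈ c, f i := hfi ▸ subset_biUnion_of_mem hi
  exact ⟨G', hG', hKG', (upp_subset_upp_of_subset_upp hR hG'G).trans hGc, hG'G.trans hGc⟩

theorem upp_eq_of_mem_SFam_of_subset {M F F' G G' : Set U} (hFF' : upp R F ⊆ upp R F')
    (hG : G ∈ SFam R 𝓕 M F) (hG' : G' ∈ SFam R 𝓕 M F') : upp R G = upp R G' := by
  have h' : upp R G' ⊆ upp R G := hG'.2.2.2 G hG.1 hG.2.1 (hG.2.2.1.trans hFF')
  exact (hG.2.2.2 G' hG'.1 hG'.2.1 (h'.trans hG.2.2.1)).antisymm h'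

def SFamNonempty (R : U → U → Prop) (𝓕 : Set (Set U)) : Prop :=
  ∀ M ∈ joinSat 𝓕, ∀ F ∈ 𝓕, upp R M ⊆ upp R F → (SFam R 𝓕 M F).Nonempty

def BoundsIn (R : U → U → Prop) (𝓕 : Set (Set U)) (E M F : Set U) : Prop :=
  F ∈ 𝓕 ∧ F ⊆ E ∧ upp R F ⊆ E ∧ upp R M ⊆ upp R F

def hullIn (R : U → U → Prop) (𝓕 : Set (Set U)) (E M : Set U) : Set U :=
  {x | ∃ F G, BoundsIn R 𝓕 E M F ∧ G ∈ SFam R 𝓕 M F ∧ x ∈ upp R G}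

def supIn (R : U → U → Prop) (𝓕 : Set (Set U)) (E D : Set U) : Set U :=
  ⋃ M ∈ joinSat 𝓕 ∩ 𝒫 D, hullIn R 𝓕 E M

theorem BoundsIn.mono {E E' M F : Set U} (h : BoundsIn R 𝓕 E M F) (hEE' : E ⊆ E') :
    BoundsIn R 𝓕 E' M F :=
  ⟨h.1, h.2.1.trans hEE', h.2.2.1.trans hEE', h.2.2.2⟩

theorem exists_boundsIn (hR : Transitive R) (hfin : ∀ F ∈ 𝓕, F.Finite) {E M : Set U}
    (hE : CFClosed R 𝓕 E) (hM : M ∈ joinSat 𝓕) (hME : M ⊆ E) : ∃ F, BoundsIn R 𝓕 E M F := by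
  obtain ⟨F, hF, hMF, hFE, hFE'⟩ := hE M (finite_of_mem_joinSat hfin hM) hME
  exact ⟨F, hF, hFE', hFE, upp_subset_upp_of_subset_upp hR hMF⟩

theorem upp_subset_upp_of_mem_SFam (hR : Transitive R) (hfin : ∀ F ∈ 𝓕, F.Finite)
    (hS : SFamNonempty R 𝓕) {E M M' F F' G G' : Set U} (hE : CFClosed R 𝓕 E)
    (hM : M ∈ joinSat 𝓕) (hM' : M' ∈ joinSat 𝓕) (hMM' : upp R M ⊆ upp R M')
    (hF : BoundsIn R 𝓕 E M F) (hF' : BoundsIn R 𝓕 E M' F')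
    (hG : G ∈ SFam R 𝓕 M F) (hG' : G' ∈ SFam R 𝓕 M' F') : upp R G ⊆ upp R G' := by
  obtain ⟨F'', hF'', hFF'', -, -⟩ :=
    hE (F ∪ F') ((hfin F hF.1).union (hfin F' hF'.1)) (union_subset hF.2.1 hF'.2.1)
  have hF_F'' := upp_subset_upp_of_subset_upp hR (subset_union_left.trans hFF'')
  have hF'_F'' := upp_subset_upp_of_subset_upp hR (subset_union_right.trans hFF'')
  obtain ⟨H, hH⟩ := hS M hM F'' hF'' (hF.2.2.2.trans hF_F'')
  obtain ⟨H', hH'⟩ := hS M' hM' F'' hF'' (hF'.2.2.2.trans hF'_F'')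
  calc upp R G = upp R H := upp_eq_of_mem_SFam_of_subset hF_F'' hG hH
    _ ⊆ upp R H' := hH.2.2.2 H' hH'.1 (hMM'.trans hH'.2.1) hH'.2.2.1
    _ = upp R G' := (upp_eq_of_mem_SFam_of_subset hF'_F'' hG' hH').symm

theorem hullIn_eq (hR : Transitive R) (hfin : ∀ F ∈ 𝓕, F.Finite) (hS : SFamNonempty R 𝓕)
    {E M F G : Set U} (hE : CFClosed R 𝓕 E) (hM : M ∈ joinSat 𝓕) (hF : BoundsIn R 𝓕 E M F)
    (hG : G ∈ SFam R 𝓕 M F) : hullIn R 𝓕 E M = upp R G := by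
  refine Subset.antisymm ?_ fun x hx => ⟨F, G, hF, hG, hx⟩
  rintro x ⟨F₀, G₀, hF₀, hG₀, hx⟩
  exact upp_subset_upp_of_mem_SFam hR hfin hS hE hM hM subset_rfl hF₀ hF hG₀ hG hx

theorem exists_boundsIn_mem_SFam (hR : Transitive R) (hfin : ∀ F ∈ 𝓕, F.Finite)
    (hS : SFamNonempty R 𝓕) {E M : Set U} (hE : CFClosed R 𝓕 E) (hM : M ∈ joinSat 𝓕)
    (hME : M ⊆ E) : ∃ F G, BoundsIn R 𝓕 E M F ∧ G ∈ SFam R 𝓕 M F := by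
  obtain ⟨F, hF⟩ := exists_boundsIn hR hfin hE hM hME
  obtain ⟨G, hG⟩ := hS M hM F hF.1 hF.2.2.2
  exact ⟨F, G, hF, hG⟩

theorem upp_subset_hullIn (hR : Transitive R) (hfin : ∀ F ∈ 𝓕, F.Finite)
    (hS : SFamNonempty R 𝓕) {E M : Set U} (hE : CFClosed R 𝓕 E) (hM : M ∈ joinSat 𝓕)
    (hME : M ⊆ E) : upp R M ⊆ hullIn R 𝓕 E M := by
  obtain ⟨F, G, hF, hG⟩ := exists_boundsIn_mem_SFam hR hfin hS hE hM hME
  exact fun x hx => ⟨F, G, hF, hG, hG.2.1 hx⟩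

theorem hullIn_subset (E M : Set U) : hullIn R 𝓕 E M ⊆ E := by
  rintro x ⟨F, G, hF, hG, hx⟩
  exact hF.2.2.1 (hG.2.2.1 hx)

theorem hullIn_mono (hR : Transitive R) (hfin : ∀ F ∈ 𝓕, F.Finite) (hS : SFamNonempty R 𝓕)
    {E M M' : Set U} (hE : CFClosed R 𝓕 E) (hM : M ∈ joinSat 𝓕) (hM' : M' ∈ joinSat 𝓕)
    (hM'E : M' ⊆ E) (hMM' : upp R M ⊆ upp R M') : hullIn R 𝓕 E M ⊆ hullIn R 𝓕 E M' := by
  rintro x ⟨F₀, G₀, hF₀, hG₀, hx⟩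
  obtain ⟨F, G, hF, hG⟩ := exists_boundsIn_mem_SFam hR hfin hS hE hM' hM'E
  exact ⟨F, G, hF, hG, upp_subset_upp_of_mem_SFam hR hfin hS hE hM hM' hMM' hF₀ hF hG₀ hG hx⟩

theorem isLeast_supIn (hCF : IsCFApprox R 𝓕) (hS : SFamNonempty R 𝓕) {E D : Set U}
    (hE : CFClosed R 𝓕 E) (hDE : D ⊆ E) (hne : ∃ F ∈ 𝓕, F ⊆ D)
    (hcover : ∀ x ∈ D, ∃ F ∈ 𝓕, F ⊆ D ∧ x ∈ upp R F) :
    IsLeast {H | CFClosed R 𝓕 H ∧ H ⊆ E ∧ D ⊆ H} (supIn R 𝓕 E D) := by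
  obtain ⟨hR, -, hfin, hinterp⟩ := hCF
  have hmono {M M'} (hM : M ∈ joinSat 𝓕 ∩ 𝒫 D) (hM' : M' ∈ joinSat 𝓕 ∩ 𝒫 D)
      (hMM' : M ⊆ M') : hullIn R 𝓕 E M ⊆ hullIn R 𝓕 E M' :=
    hullIn_mono hR hfin hS hE hM.1 hM'.1 (hM'.2.trans hDE) (upp_mono hMM')
  refine ⟨⟨?closed, iUnion₂_subset fun M _ => hullIn_subset E M, ?cover⟩, ?least⟩
  case closed =>
    obtain ⟨F₀, hF₀, hF₀D⟩ := hne
    refine cfClosed_biUnion hR hinterp ⟨F₀, mem_joinSat_of_mem hF₀, hF₀D⟩ ?_ ?_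
    · intro M hM M' hM'
      have hMM' : M ∪ M' ∈ joinSat 𝓕 ∩ 𝒫 D :=
        ⟨union_mem_joinSat hM.1 hM'.1, union_subset hM.2 hM'.2⟩
      exact ⟨M ∪ M', hMM', hmono hM hMM' subset_union_left, hmono hM' hMM' subset_union_right⟩
    · intro M hM
      obtain ⟨F, G, hF, hG⟩ := exists_boundsIn_mem_SFam hR hfin hS hE hM.1 (hM.2.trans hDE)
      exact ⟨G, hG.1, hullIn_eq hR hfin hS hE hM.1 hF hG⟩
  case cover =>
    intro x hx
    obtain ⟨F, hF, hFD, hxF⟩ := hcover x hx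
    exact mem_biUnion ⟨mem_joinSat_of_mem hF, hFD⟩
      (upp_subset_hullIn hR hfin hS hE (mem_joinSat_of_mem hF) (hFD.trans hDE) hxF)
  case least =>
    rintro H ⟨hH, hHE, hDH⟩
    refine iUnion₂_subset fun M hM => ?_
    obtain ⟨F, hF⟩ := exists_boundsIn hR hfin hH hM.1 (hM.2.trans hDH)
    obtain ⟨G, hG⟩ := hS M hM.1 F hF.1 hF.2.2.2
    rw [hullIn_eq hR hfin hS hE hM.1 (hF.mono hHE) hG]
    exact hG.2.2.1.trans hF.2.2.1

end CFSup

/-- if `S*(K, F) ≠ ∅` for all `K ∈ 𝓕^♯` and `F ∈ 𝓕` with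
`upp R K ⊆ upp R F`, then the CF-closed subsets of a CF-closed set `E` form a
sup-semilattice under inclusion. -/
theorem stmt7 {U : Type*} (R : U → U → Prop) (𝓕 : Set (Set U))
    (hCF : IsCFApprox R 𝓕) (E : Set U) (hE : CFClosed R 𝓕 E)
    (hS : ∀ K ∈ joinSat 𝓕, ∀ F ∈ 𝓕, upp R K ⊆ upp R F →
      (SStar R 𝓕 K F).Nonempty) :
    ∀ H₁ H₂ : Set U, CFClosed R 𝓕 H₁ → H₁ ⊆ E → CFClosed R 𝓕 H₂ → H₂ ⊆ E →
      ∃ H : Set U, CFClosed R 𝓕 H ∧ H ⊆ E ∧ H₁ ⊆ H ∧ H₂ ⊆ H ∧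
        ∀ H' : Set U, CFClosed R 𝓕 H' → H' ⊆ E → H₁ ⊆ H' → H₂ ⊆ H' → H ⊆ H' := by
  intro H₁ H₂ hH₁ hH₁E hH₂ hH₂E
  have hSFam : SFamNonempty R 𝓕 := fun M hM F hF h => (hS M hM F hF h).imp fun _ hG => hG.1
  have hne : ∃ F ∈ 𝓕, F ⊆ H₁ ∪ H₂ :=
    let ⟨F, hF, hFH₁⟩ := hH₁.exists_subset; ⟨F, hF, hFH₁.trans subset_union_left⟩
  have hcover : ∀ x ∈ H₁ ∪ H₂, ∃ F ∈ 𝓕, F ⊆ H₁ ∪ H₂ ∧ x ∈ upp R F := by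
    rintro x (hx | hx)
    · obtain ⟨F, hF, hFH, hxF⟩ := hH₁.exists_subset_mem_upp hx
      exact ⟨F, hF, hFH.trans subset_union_left, hxF⟩
    · obtain ⟨F, hF, hFH, hxF⟩ := hH₂.exists_subset_mem_upp hx
      exact ⟨F, hF, hFH.trans subset_union_right, hxF⟩
  obtain ⟨⟨hclosed, hsubE, hsup⟩, hleast⟩ :=
    isLeast_supIn hCF hSFam hE (union_subset hH₁E hH₂E) hne hcover
  exact ⟨_, hclosed, hsubE, subset_union_left.trans hsup, subset_union_right.trans hsup,
    fun H hH hHE h₁ h₂ => hleast ⟨hH, hHE, union_subset h₁ h₂⟩⟩
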